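/- Let L ≥ 1 and define f : ℝ^{2L} → ℝ^{2L} by f(x_1,…,x_L,y_1,…,y_L) = (Σ_{ℓ=1}^L x_ℓ, Σ_{ℓ=1}^L x_ℓ y_ℓ, …, Σ_{ℓ=1}^L x_ℓ y_ℓ^{2L−1}). Let c_1, …, c_L be nonzero reals and ρ_1, …, ρ_L pairwise distinct reals. Then f is a local diffeomorphism at the point p = (c_1,…,c_L,ρ_1,…,ρ_L): there exist open sets U ∋ p and V ∋ f(p) such that f restricts to a bijection from U onto V whose inverse is continuously differentiable. -/

import Mathlib

/-!
The Jacobian of the moment map at `(c, ρ)` sends `(dx, dy)` to the values of the functional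
`q ↦ ∑ ℓ (dx ℓ * q(ρ ℓ) + c ℓ * dy ℓ * q'(ρ ℓ))` on the monomials `X ^ k`, `k < 2L`. If these
vanish, the functional kills every polynomial of degree `< 2L`; testing it against
`g ^ 2 * (X - ρ ℓ)` and `g ^ 2`, where `g = ∏_{j ≠ ℓ} (X - ρ j)`, isolates `c ℓ * dy ℓ` and then
`dx ℓ` (Hermite interpolation). So the Jacobian is invertible and the inverse function theorem
applies.
-/

open Polynomial Finset Lagrange
open scoped ContDiff

/-- The moment map sending weights `x` and nodes `y` to the power sums
`(∑_ℓ x_ℓ y_ℓ^k)_{k = 0, …, 2L-1}`. -/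
noncomputable def momentMap (L : ℕ) :
    (Fin L → ℝ) × (Fin L → ℝ) → (Fin (2 * L) → ℝ) :=
  fun p k => ∑ ℓ, p.1 ℓ * p.2 ℓ ^ (k : ℕ)

theorem ContDiffAt.exists_isOpen_bijOn_contDiffOn_inverse {𝕜 : Type*} [RCLike 𝕜]
    {E F : Type*} [NormedAddCommGroup E] [NormedSpace 𝕜 E] [CompleteSpace E]
    [NormedAddCommGroup F] [NormedSpace 𝕜 F] [CompleteSpace F]
    {f : E → F} {f' : E →L[𝕜] F} {a : E} {n : WithTop ℕ∞}
    (hf : ContDiffAt 𝕜 n f a) (hf' : HasFDerivAt f f' a) (hbij : Function.Bijective f')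
    (hn : n ≠ 0) (hn' : n ≠ ∞) :
    ∃ (U : Set E) (V : Set F), IsOpen U ∧ IsOpen V ∧ a ∈ U ∧ f a ∈ V ∧ Set.BijOn f U V ∧
      ∃ g : F → E, ContDiffOn 𝕜 n g V ∧ (∀ x ∈ U, g (f x) = x) ∧ (∀ y ∈ V, f (g y) = y) := by
  let e : E ≃L[𝕜] F := .ofBijective f' (LinearMap.ker_eq_bot.mpr hbij.1)
    (LinearMap.range_eq_top.mpr hbij.2)
  have he : HasFDerivAt f (e : E →L[𝕜] F) a := hf'
  let Φ := hf.toOpenPartialHomeomorph f he hn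
  obtain ⟨W, hW, hW_open, haW⟩ :=
    eventually_nhds_iff.mp ((hf.to_localInverse he hn).eventually hn')
  -- `Φ` with its target cut down to the neighbourhood `W` on which `Φ.symm` is `C^n`
  let Ψ := (Φ.symm.restrOpen W hW_open).symm
  exact ⟨Ψ.source, Ψ.target, Ψ.open_source, Ψ.open_target,
    ⟨hf.mem_toOpenPartialHomeomorph_source he hn, haW⟩,
    ⟨hf.image_mem_toOpenPartialHomeomorph_target he hn, haW⟩, Ψ.bijOn,
    Ψ.symm, fun y hy => (hW y hy.2).contDiffWithinAt,
    fun _ hx => Ψ.left_inv hx, fun _ hy => Ψ.right_inv hy⟩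

theorem LinearMap.map_eq_zero_of_natDegree_lt {R M : Type*} [CommRing R] [AddCommGroup M]
    [Module R M] (f : R[X] →ₗ[R] M) {n : ℕ} (h : ∀ k < n, f (X ^ k) = 0) {p : R[X]}
    (hp : p.natDegree < n) : f p = 0 := by
  rw [p.as_sum_range' n hp, map_sum]
  refine sum_eq_zero fun k hk => ?_
  rw [← smul_X_eq_monomial, map_smul, h k (Finset.mem_range.mp hk), smul_zero]

namespace Polynomial

variable {R : Type*} [CommRing R]

theorem eval_eq_zero_and_eval_derivative_eq_zero_of_sq_dvd {p : R[X]} {x : R}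
    (h : (X - C x) ^ 2 ∣ p) : p.eval x = 0 ∧ p.derivative.eval x = 0 := by
  constructor
  · exact dvd_iff_isRoot.mp ((dvd_pow_self _ two_ne_zero).trans h)
  · have h' := pow_sub_one_dvd_derivative_of_pow_dvd h
    rw [Nat.add_one_sub_one, pow_one] at h'
    exact dvd_iff_isRoot.mp h'

variable {ι : Type*} [Fintype ι]

noncomputable def hermiteFunctional (ρ a b : ι → R) : R[X] →ₗ[R] R :=
  ∑ i, (a i • leval (ρ i) + b i • leval (ρ i) ∘ₗ derivative)

@[simp]
theorem hermiteFunctional_apply (ρ a b : ι → R) (p : R[X]) :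
    hermiteFunctional ρ a b p = ∑ i, (a i * p.eval (ρ i) + b i * p.derivative.eval (ρ i)) := by
  simp [hermiteFunctional]

theorem hermiteFunctional_X_pow (ρ a b : ι → R) (k : ℕ) :
    hermiteFunctional ρ a b (X ^ k) = ∑ i, (a i * ρ i ^ k + b i * k * ρ i ^ (k - 1)) := by
  simp [derivative_X_pow, mul_assoc]

variable [DecidableEq ι]

theorem hermiteFunctional_of_sq_nodal_erase_dvd (ρ a b : ι → R) {i : ι} {p : R[X]}
    (hp : nodal (univ.erase i) ρ ^ 2 ∣ p) :
    hermiteFunctional ρ a b p = a i * p.eval (ρ i) + b i * p.derivative.eval (ρ i) := by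
  rw [hermiteFunctional_apply, sum_eq_single i _ (by simp)]
  intro j _ hji
  have hj : (X - C (ρ j)) ^ 2 ∣ p :=
    (pow_dvd_pow_of_dvd (X_sub_C_dvd_nodal ρ (mem_erase.mpr ⟨hji, mem_univ j⟩)) 2).trans hp
  obtain ⟨h₀, h₁⟩ := eval_eq_zero_and_eval_derivative_eq_zero_of_sq_dvd hj
  rw [h₀, h₁, mul_zero, mul_zero, add_zero]

variable [IsDomain R]

theorem eq_zero_of_hermiteFunctional_eq_zero {ρ a b : ι → R} (hρ : Function.Injective ρ)
    (h : ∀ p : R[X], p.natDegree < 2 * Fintype.card ι → hermiteFunctional ρ a b p = 0) :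
    a = 0 ∧ b = 0 := by
  suffices h' : ∀ i, a i = 0 ∧ b i = 0 from
    ⟨_root_.funext fun i => (h' i).1, _root_.funext fun i => (h' i).2⟩
  intro i
  set g := nodal (univ.erase i) ρ
  have hg_deg : g.natDegree + 1 = Fintype.card ι := by
    rw [natDegree_nodal, card_erase_add_one (mem_univ i), card_univ]
  have hg_eval : g.eval (ρ i) ≠ 0 :=
    eval_nodal_not_at_node fun j hj => hρ.ne (mem_erase.mp hj).1.symm
  have hb : b i = 0 := by
    have hdeg : (g ^ 2 * (X - C (ρ i))).natDegree < 2 * Fintype.card ι :=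
      calc _ ≤ 2 * g.natDegree + 1 :=
            natDegree_mul_le.trans (add_le_add natDegree_pow_le (natDegree_X_sub_C _).le)
        _ < 2 * Fintype.card ι := by omega
    have := h _ hdeg
    rw [hermiteFunctional_of_sq_nodal_erase_dvd ρ a b (dvd_mul_right _ _)] at this
    simpa [g, hg_eval] using this
  have ha : a i = 0 := by
    have hdeg : (g ^ 2).natDegree < 2 * Fintype.card ι :=
      natDegree_pow_le.trans_lt (by omega)
    have := h _ hdeg
    rw [hermiteFunctional_of_sq_nodal_erase_dvd ρ a b dvd_rfl, hb] at this
    simpa [g, hg_eval] using this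
  exact ⟨ha, hb⟩

end Polynomial

open ContinuousLinearMap

noncomputable def momentMapDeriv (L : ℕ) (p : (Fin L → ℝ) × (Fin L → ℝ)) :
    ((Fin L → ℝ) × (Fin L → ℝ)) →L[ℝ] (Fin (2 * L) → ℝ) :=
  pi fun k => ∑ ℓ, (p.2 ℓ ^ (k : ℕ) • (proj ℓ).comp (fst ℝ _ _)
    + (p.1 ℓ * (k : ℕ) * p.2 ℓ ^ ((k : ℕ) - 1)) • (proj ℓ).comp (snd ℝ _ _))

@[simp]
theorem momentMapDeriv_apply (L : ℕ) (p v : (Fin L → ℝ) × (Fin L → ℝ)) (k : Fin (2 * L)) :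
    momentMapDeriv L p v k =
      ∑ ℓ, (p.2 ℓ ^ (k : ℕ) * v.1 ℓ + p.1 ℓ * (k : ℕ) * p.2 ℓ ^ ((k : ℕ) - 1) * v.2 ℓ) := by
  simp [momentMapDeriv]

theorem contDiff_momentMap (L : ℕ) {n : WithTop ℕ∞} : ContDiff ℝ n (momentMap L) := by
  unfold momentMap
  fun_prop

theorem hasFDerivAt_momentMap (L : ℕ) (p : (Fin L → ℝ) × (Fin L → ℝ)) :
    HasFDerivAt (momentMap L) (momentMapDeriv L p) p := by
  rw [hasFDerivAt_pi']
  intro k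
  rw [momentMapDeriv, proj_pi]
  refine HasFDerivAt.fun_sum fun ℓ _ => ?_
  have hx := (hasFDerivAt_apply (𝕜 := ℝ) ℓ p.1).comp p (hasFDerivAt_fst (p := p))
  have hy := (hasFDerivAt_apply (𝕜 := ℝ) ℓ p.2).comp p (hasFDerivAt_snd (p := p))
  refine (hx.mul (hy.pow (k : ℕ))).congr_fderiv ?_
  simp only [Function.comp_apply]
  module

theorem momentMapDeriv_apply_eq_hermiteFunctional (L : ℕ) (p v : (Fin L → ℝ) × (Fin L → ℝ))
    (k : Fin (2 * L)) :
    momentMapDeriv L p v k = hermiteFunctional p.2 v.1 (p.1 * v.2) (X ^ (k : ℕ)) := by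
  rw [momentMapDeriv_apply, hermiteFunctional_X_pow]
  refine sum_congr rfl fun ℓ _ => ?_
  simp only [Pi.mul_apply]
  ring

theorem momentMapDeriv_injective {L : ℕ} {p : (Fin L → ℝ) × (Fin L → ℝ)}
    (hc : ∀ ℓ, p.1 ℓ ≠ 0) (hρ : Function.Injective p.2) :
    Function.Injective (momentMapDeriv L p) := by
  rw [injective_iff_map_eq_zero]
  intro v hv
  have hX (k : ℕ) (hk : k < 2 * L) : hermiteFunctional p.2 v.1 (p.1 * v.2) (X ^ k) = 0 := by
    rw [← momentMapDeriv_apply_eq_hermiteFunctional L p v ⟨k, hk⟩, hv, Pi.zero_apply]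
  obtain ⟨h₁, h₂⟩ := eq_zero_of_hermiteFunctional_eq_zero hρ fun q hq =>
    LinearMap.map_eq_zero_of_natDegree_lt _ hX (by simpa using hq)
  refine Prod.ext h₁ (funext fun ℓ => ?_)
  exact (mul_eq_zero.mp (congrFun h₂ ℓ)).resolve_left (hc ℓ)

theorem momentMapDeriv_bijective {L : ℕ} {p : (Fin L → ℝ) × (Fin L → ℝ)}
    (hc : ∀ ℓ, p.1 ℓ ≠ 0) (hρ : Function.Injective p.2) :
    Function.Bijective (momentMapDeriv L p) := by
  have hinj := momentMapDeriv_injective hc hρ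
  refine ⟨hinj, (LinearMap.injective_iff_surjective_of_finrank_eq_finrank ?_).mp hinj⟩
  simp [Module.finrank_prod, two_mul]

theorem momentMap_local_diffeo_general (L : ℕ)
    (c ρ : Fin L → ℝ) (hc : ∀ j, c j ≠ 0) (hρ : Function.Injective ρ) :
    ∃ (U : Set ((Fin L → ℝ) × (Fin L → ℝ))) (V : Set (Fin (2 * L) → ℝ)),
      IsOpen U ∧ IsOpen V ∧ (c, ρ) ∈ U ∧ momentMap L (c, ρ) ∈ V ∧
      Set.BijOn (momentMap L) U V ∧
      ∃ g : (Fin (2 * L) → ℝ) → (Fin L → ℝ) × (Fin L → ℝ),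
        ContDiffOn ℝ 1 g V ∧
        (∀ p ∈ U, g (momentMap L p) = p) ∧
        (∀ v ∈ V, momentMap L (g v) = v) :=
  (contDiff_momentMap L).contDiffAt.exists_isOpen_bijOn_contDiffOn_inverse
    (hasFDerivAt_momentMap L (c, ρ)) (momentMapDeriv_bijective (p := (c, ρ)) hc hρ)
    one_ne_zero (by simp)

/-- **The moment map is a local diffeomorphism at `(c, ρ)`** when the weights `c_ℓ` are
nonzero and the nodes `ρ_ℓ` are pairwise distinct: there are open sets `U ∋ (c, ρ)` and
`V ∋ f (c, ρ)` such that `f` maps `U` bijectively onto `V`, with a continuously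
differentiable inverse on `V`. -/
theorem momentMap_local_diffeo (L : ℕ) (hL : 1 ≤ L)
    (c ρ : Fin L → ℝ) (hc : ∀ j, c j ≠ 0) (hρ : Function.Injective ρ) :
    ∃ (U : Set ((Fin L → ℝ) × (Fin L → ℝ))) (V : Set (Fin (2 * L) → ℝ)),
      IsOpen U ∧ IsOpen V ∧ (c, ρ) ∈ U ∧ momentMap L (c, ρ) ∈ V ∧
      Set.BijOn (momentMap L) U V ∧
      ∃ g : (Fin (2 * L) → ℝ) → (Fin L → ℝ) × (Fin L → ℝ),
        ContDiffOn ℝ 1 g V ∧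
        (∀ p ∈ U, g (momentMap L p) = p) ∧
        (∀ v ∈ V, momentMap L (g v) = v) :=
  momentMap_local_diffeo_general L c ρ hc hρ
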